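/- arXiv:1911.08889 — 3 statements merged into one kernel-verified Lean document; each statement's English description precedes it below -/
import Mathlib

section
/- If G is a finite Z-insensitive graph, then the game Z-domination number of G equals the game domination number of G, and the Staller-start game Z-domination number of G equals the Staller-start game domination number of G: γ_Zg(G) = γ_g(G) and γ'_Zg(G) = γ'_g(G). -/
open Finset

open scoped Classical

noncomputable section

namespace ZGamePaper

variable {V : Type*} {W : Type*}

/-- The closed neighborhood `N[v]` of a vertex as a `Finset`. -/
def closedNF [Fintype V] (G : SimpleGraph V) (v : V) : Finset V :=
  Finset.univ.filter fun x => x = v ∨ G.Adj v x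

/-- The open neighborhood `N(v)` of a vertex as a `Finset`. -/
def openNF [Fintype V] (G : SimpleGraph V) (v : V) : Finset V :=
  Finset.univ.filter fun x => G.Adj v x

lemma openNF_subset_closedNF [Fintype V] (G : SimpleGraph V) (v : V) :
    openNF G v ⊆ closedNF G v := by
  intro x hx
  simp only [openNF, closedNF, mem_filter] at hx ⊢
  exact ⟨hx.1, Or.inr hx.2⟩

lemma measure_dec [Fintype V] {A C : Finset V} {w : V} (hw : w ∈ C) (hwA : w ∉ A) :
    (Finset.univ \ (A ∪ C)).card < (Finset.univ \ A).card := by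
  apply Finset.card_lt_card
  rw [Finset.ssubset_iff_of_subset
    (Finset.sdiff_subset_sdiff (le_refl _) Finset.subset_union_left)]
  refine ⟨w, ?_, ?_⟩
  · simp [hwA]
  · simp [hw]

/-! ### The Z-domination game -/

/-- The set of legal moves in the Z-domination game, given the set `A` of
already dominated vertices: a vertex `v` is legal if `N(v) ⊄ A`. -/
def zLegal [Fintype V] (G : SimpleGraph V) (A : Finset V) : Finset V :=
  Finset.univ.filter fun v => ¬ openNF G v ⊆ A

lemma zLegal_dec [Fintype V] (G : SimpleGraph V) (A : Finset V) {v : V}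
    (hv : v ∈ zLegal G A) :
    (Finset.univ \ (A ∪ closedNF G v)).card < (Finset.univ \ A).card := by
  simp only [zLegal, mem_filter] at hv
  obtain ⟨w, hw1, hw2⟩ := Finset.not_subset.mp hv.2
  exact measure_dec (openNF_subset_closedNF G v hw1) hw2

/-- The optimal number of remaining moves in the Z-domination game played on `G`,
where `A` is the set of already dominated vertices and `turn = true` iff it is
Dominator's (the minimizer's) turn. -/
def zVal [Fintype V] (G : SimpleGraph V) (turn : Bool) (A : Finset V) : ℕ :=
  if h : (zLegal G A).Nonempty then
    if turn then
      1 + ((zLegal G A).attach.inf' h.attach fun v => zVal G false (A ∪ closedNF G v.1))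
    else
      1 + ((zLegal G A).attach.sup' h.attach fun v => zVal G true (A ∪ closedNF G v.1))
  else 0
termination_by (Finset.univ \ A).card
decreasing_by
  · exact zLegal_dec G A v.2
  · exact zLegal_dec G A v.2

/-- The game Z-domination number `γ_Zg(G)` (Dominator starts). -/
def gammaZg [Fintype V] (G : SimpleGraph V) : ℕ := zVal G true ∅

/-- The Staller-start game Z-domination number `γ'_Zg(G)`. -/
def gammaZg' [Fintype V] (G : SimpleGraph V) : ℕ := zVal G false ∅

/-! ### The (ordinary) domination game -/

/-- The set of legal moves in the domination game: `v` is legal if `N[v] ⊄ A`.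
This set is nonempty if and only if `A ≠ V(G)`. -/
def dLegal [Fintype V] (G : SimpleGraph V) (A : Finset V) : Finset V :=
  Finset.univ.filter fun v => ¬ closedNF G v ⊆ A

lemma dLegal_dec [Fintype V] (G : SimpleGraph V) (A : Finset V) {v : V}
    (hv : v ∈ dLegal G A) :
    (Finset.univ \ (A ∪ closedNF G v)).card < (Finset.univ \ A).card := by
  simp only [dLegal, mem_filter] at hv
  obtain ⟨w, hw1, hw2⟩ := Finset.not_subset.mp hv.2
  exact measure_dec hw1 hw2

/-- The optimal number of remaining moves in the domination game on `G`, with `A`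
the set of already dominated vertices; `turn = true` iff it is Dominator's turn.
(There is no legal move iff `A = V(G)`.) -/
def dVal [Fintype V] (G : SimpleGraph V) (turn : Bool) (A : Finset V) : ℕ :=
  if h : (dLegal G A).Nonempty then
    if turn then
      1 + ((dLegal G A).attach.inf' h.attach fun v => dVal G false (A ∪ closedNF G v.1))
    else
      1 + ((dLegal G A).attach.sup' h.attach fun v => dVal G true (A ∪ closedNF G v.1))
  else 0
termination_by (Finset.univ \ A).card
decreasing_by
  · exact dLegal_dec G A v.2
  · exact dLegal_dec G A v.2

/-- The game domination number `γ_g(G)` (Dominator starts). -/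
def gammaGg [Fintype V] (G : SimpleGraph V) : ℕ := dVal G true ∅

/-- The Staller-start game domination number `γ'_g(G)`. -/
def gammaGg' [Fintype V] (G : SimpleGraph V) : ℕ := dVal G false ∅

/-! ### The total domination game -/

/-- The set of legal moves in the total domination game: `v` is legal if `N(v) ⊄ B`.
For a graph without isolated vertices this set is nonempty iff `B ≠ V(G)`. -/
def tLegal [Fintype V] (G : SimpleGraph V) (B : Finset V) : Finset V :=
  Finset.univ.filter fun v => ¬ openNF G v ⊆ B

lemma tLegal_dec [Fintype V] (G : SimpleGraph V) (B : Finset V) {v : V}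
    (hv : v ∈ tLegal G B) :
    (Finset.univ \ (B ∪ openNF G v)).card < (Finset.univ \ B).card := by
  simp only [tLegal, mem_filter] at hv
  obtain ⟨w, hw1, hw2⟩ := Finset.not_subset.mp hv.2
  exact measure_dec hw1 hw2

/-- The optimal number of remaining moves in the total domination game on `G`,
with `B` the set of already totally dominated vertices; `turn = true` iff it is
Dominator's turn. -/
def tVal [Fintype V] (G : SimpleGraph V) (turn : Bool) (B : Finset V) : ℕ :=
  if h : (tLegal G B).Nonempty then
    if turn then
      1 + ((tLegal G B).attach.inf' h.attach fun v => tVal G false (B ∪ openNF G v.1))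
    else
      1 + ((tLegal G B).attach.sup' h.attach fun v => tVal G true (B ∪ openNF G v.1))
  else 0
termination_by (Finset.univ \ B).card
decreasing_by
  · exact tLegal_dec G B v.2
  · exact tLegal_dec G B v.2

/-- The game total domination number `γ_tg(G)` (Dominator starts). -/
def gammaTg [Fintype V] (G : SimpleGraph V) : ℕ := tVal G true ∅

/-! ### The L-domination game -/

/-- The set of legal moves in the L-domination game, given the set `P` of vertices
played so far: `v` is legal if `v ∉ P` and `N[v] ⊄ N(P)`. -/
def lLegal [Fintype V] (G : SimpleGraph V) (P : Finset V) : Finset V :=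
  Finset.univ.filter fun v => v ∉ P ∧ ¬ closedNF G v ⊆ P.biUnion (openNF G)

lemma lLegal_dec [Fintype V] (G : SimpleGraph V) (P : Finset V) {v : V}
    (hv : v ∈ lLegal G P) :
    (Finset.univ \ insert v P).card < (Finset.univ \ P).card := by
  simp only [lLegal, mem_filter] at hv
  apply Finset.card_lt_card
  rw [Finset.ssubset_iff_of_subset
    (Finset.sdiff_subset_sdiff (le_refl _) (Finset.subset_insert _ _))]
  exact ⟨v, by simp [hv.2.1], by simp⟩

/-- The optimal number of remaining moves in the L-domination game on `G`, with `P`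
the set of vertices played so far; `turn = true` iff it is Dominator's turn. -/
def lVal [Fintype V] (G : SimpleGraph V) (turn : Bool) (P : Finset V) : ℕ :=
  if h : (lLegal G P).Nonempty then
    if turn then
      1 + ((lLegal G P).attach.inf' h.attach fun v => lVal G false (insert v.1 P))
    else
      1 + ((lLegal G P).attach.sup' h.attach fun v => lVal G true (insert v.1 P))
  else 0
termination_by (Finset.univ \ P).card
decreasing_by
  · exact lLegal_dec G P v.2
  · exact lLegal_dec G P v.2

/-- The game L-domination number `γ_Lg(G)` (Dominator starts). -/
def gammaLg [Fintype V] (G : SimpleGraph V) : ℕ := lVal G true ∅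

/-! ### Domination number and related notions -/

/-- The domination number `γ(G)`: the minimum size of a set `S` with `N[S] = V(G)`. -/
def gammaNum [Fintype V] (G : SimpleGraph V) : ℕ :=
  sInf {k | ∃ S : Finset V, S.card = k ∧ ∀ v : V, ∃ u ∈ S, v ∈ closedNF G u}

/-- The partially dominated graph `G|A` has a Z-configuration if there is an
undominated vertex `v` all of whose neighbors are dominated, while every neighbor
of `v` has at least two undominated neighbors. -/
def HasZConfig [Fintype V] (G : SimpleGraph V) (A : Finset V) : Prop :=
  ∃ v : V, v ∉ A ∧ openNF G v ⊆ A ∧ ∀ u ∈ openNF G v, 2 ≤ (openNF G u \ A).card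

/-- A graph without isolated vertices is Z-insensitive if for every `D ⊆ V(G)` the
partially dominated graph `G|N[D]` has no Z-configuration. -/
def ZInsensitive [Fintype V] (G : SimpleGraph V) : Prop :=
  (∀ v : V, ∃ u : V, G.Adj v u) ∧
    ∀ D : Finset V, ¬ HasZConfig G (D.biUnion (closedNF G))

/-- A vertex `w` is the center of a claw if it has three pairwise non-adjacent
neighbors. -/
def IsClawCenter (G : SimpleGraph V) (w : V) : Prop :=
  ∃ a b c : V, G.Adj w a ∧ G.Adj w b ∧ G.Adj w c ∧ a ≠ b ∧ a ≠ c ∧ b ≠ c ∧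
    ¬ G.Adj a b ∧ ¬ G.Adj a c ∧ ¬ G.Adj b c

/-- A graph is weakly claw-free if every vertex has a neighbor that is not the
center of a claw. -/
def WeaklyClawFree (G : SimpleGraph V) : Prop :=
  ∀ v : V, ∃ u : V, G.Adj v u ∧ ¬ IsClawCenter G u

/-- The lexicographic product `G ∘ H`. -/
def lexProd (G : SimpleGraph V) (H : SimpleGraph W) : SimpleGraph (V × W) where
  Adj p q := G.Adj p.1 q.1 ∨ (p.1 = q.1 ∧ H.Adj p.2 q.2)
  symm := by
    constructor
    rintro p q (h | ⟨h1, h2⟩)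
    · exact Or.inl h.symm
    · exact Or.inr ⟨h1.symm, h2.symm⟩
  loopless := by
    constructor
    rintro p (h | ⟨_, h⟩)
    · exact G.loopless.irrefl _ h
    · exact H.loopless.irrefl _ h

/-! In `G|A` with no Z-configuration, every move of the domination game that is illegal in the
Z-domination game, i.e. a vertex `v ∉ A` with `N(v) ⊆ A`, can be replaced by a Z-legal move with
the same effect: some neighbor `u` of `v` has `v` as its only undominated neighbor, and playing
`u` dominates exactly `v`. So from every state `N[D]` both games lead to the same set of states,
and by induction their values agree. -/

lemma closedNF_eq_insert_openNF [Fintype V] (G : SimpleGraph V) (v : V) :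
    closedNF G v = insert v (openNF G v) := by
  ext x
  simp [closedNF, openNF]

lemma zLegal_subset_dLegal [Fintype V] (G : SimpleGraph V) (A : Finset V) :
    zLegal G A ⊆ dLegal G A := by
  intro v hv
  simp only [zLegal, dLegal, mem_filter] at hv ⊢
  exact ⟨hv.1, fun hc => hv.2 ((openNF_subset_closedNF G v).trans hc)⟩

lemma union_eq_insert_of_sdiff_eq_singleton {α : Type*} [DecidableEq α] {A C : Finset α} {v : α}
    (h : C \ A = {v}) : A ∪ C = insert v A := by
  rw [← union_sdiff_self_eq_union, h, union_comm, ← insert_eq]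

lemma exists_zLegal_union_closedNF_eq [Fintype V] (G : SimpleGraph V) {A : Finset V}
    (hA : ¬ HasZConfig G A) {v : V} (hv : v ∈ dLegal G A) :
    ∃ u ∈ zLegal G A, A ∪ closedNF G u = A ∪ closedNF G v := by
  by_cases hvz : v ∈ zLegal G A
  · exact ⟨v, hvz, rfl⟩
  simp only [zLegal, dLegal, mem_filter, mem_univ, true_and, not_not] at hv hvz
  rw [closedNF_eq_insert_openNF, insert_subset_iff] at hv
  have hvA : v ∉ A := fun hvA => hv ⟨hvA, hvz⟩
  obtain ⟨u, hu, hu_card⟩ : ∃ u ∈ openNF G v, (openNF G u \ A).card < 2 := by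
    simp only [HasZConfig, not_exists, not_and, not_forall, not_le, exists_prop] at hA
    exact hA v hvA hvz
  have hvu : v ∈ openNF G u \ A := by
    simp only [openNF, mem_filter, mem_univ, true_and] at hu
    simp [openNF, hu.symm, hvA]
  have hu_sdiff : openNF G u \ A = {v} :=
    eq_singleton_iff_unique_mem.mpr
      ⟨hvu, fun x hx => card_le_one.mp (by omega) x hx v hvu⟩
  have hu_legal : u ∈ zLegal G A := by
    simp only [zLegal, mem_filter, mem_univ, true_and]
    exact fun hsub => hvA (hsub (mem_sdiff.mp hvu).1)
  refine ⟨u, hu_legal, ?_⟩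
  rw [union_eq_insert_of_sdiff_eq_singleton (v := v), union_eq_insert_of_sdiff_eq_singleton]
  · rw [closedNF_eq_insert_openNF, insert_sdiff_of_notMem _ hvA, sdiff_eq_empty_iff_subset.mpr hvz,
      insert_empty]
  · rw [closedNF_eq_insert_openNF, insert_sdiff_of_mem _ (hvz hu), hu_sdiff]

lemma image_zLegal_eq_image_dLegal [Fintype V] (G : SimpleGraph V) {A : Finset V}
    (hA : ¬ HasZConfig G A) :
    (zLegal G A).image (A ∪ closedNF G ·) = (dLegal G A).image (A ∪ closedNF G ·) := by
  refine (image_subset_image (zLegal_subset_dLegal G A)).antisymm fun B hB => ?_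
  obtain ⟨v, hv, rfl⟩ := mem_image.mp hB
  obtain ⟨u, hu, huv⟩ := exists_zLegal_union_closedNF_eq G hA hv
  exact mem_image.mpr ⟨u, hu, huv⟩

lemma attach_sup'_congr_of_image_eq {α β γ : Type*} [DecidableEq β] [SemilatticeSup γ]
    {s t : Finset α} (hs : s.Nonempty) (ht : t.Nonempty) {g : α → β} {f₁ f₂ : β → γ}
    (himg : s.image g = t.image g) (hf : ∀ b ∈ t.image g, f₁ b = f₂ b) :
    s.attach.sup' hs.attach (fun v => f₁ (g v)) =
      t.attach.sup' ht.attach (fun v => f₂ (g v)) := by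
  refine eq_of_forall_ge_iff fun c => ?_
  simp only [sup'_le_iff, mem_attach, true_implies, Subtype.forall]
  rw [← forall_mem_image (p := (f₁ · ≤ c)), ← forall_mem_image (p := (f₂ · ≤ c)), himg]
  exact forall₂_congr fun b hb => by rw [hf b hb]

lemma attach_inf'_congr_of_image_eq {α β γ : Type*} [DecidableEq β] [SemilatticeInf γ]
    {s t : Finset α} (hs : s.Nonempty) (ht : t.Nonempty) {g : α → β} {f₁ f₂ : β → γ}
    (himg : s.image g = t.image g) (hf : ∀ b ∈ t.image g, f₁ b = f₂ b) :
    s.attach.inf' hs.attach (fun v => f₁ (g v)) =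
      t.attach.inf' ht.attach (fun v => f₂ (g v)) :=
  attach_sup'_congr_of_image_eq (γ := γᵒᵈ) hs ht himg hf

theorem zVal_biUnion_closedNF_eq_dVal [Fintype V] (G : SimpleGraph V)
    (hG : ∀ D : Finset V, ¬ HasZConfig G (D.biUnion (closedNF G))) (t : Bool) (D : Finset V) :
    zVal G t (D.biUnion (closedNF G)) = dVal G t (D.biUnion (closedNF G)) := by
  set A := D.biUnion (closedNF G) with hA
  have himg := image_zLegal_eq_image_dLegal G (hG D)
  have hsucc : ∀ t', ∀ B ∈ (dLegal G A).image (A ∪ closedNF G ·),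
      zVal G t' B = dVal G t' B := by
    intro t' B hB
    obtain ⟨v, hv, rfl⟩ := mem_image.mp hB
    have hdec := dLegal_dec G A hv
    rw [hA, union_comm, ← biUnion_insert]
    exact zVal_biUnion_closedNF_eq_dVal G hG t' (insert v D)
  rw [zVal, dVal]
  by_cases hz : (zLegal G A).Nonempty
  · have hd : (dLegal G A).Nonempty := by
      rw [← image_nonempty (f := (A ∪ closedNF G ·)), ← himg]
      exact hz.image _
    rw [dif_pos hz, dif_pos hd]
    cases t
    · exact congrArg (1 + ·) (attach_sup'_congr_of_image_eq hz hd himg (hsucc true))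
    · exact congrArg (1 + ·) (attach_inf'_congr_of_image_eq hz hd himg (hsucc false))
  · have hd : ¬ (dLegal G A).Nonempty := by
      rwa [← image_nonempty (f := (A ∪ closedNF G ·)), ← himg, image_nonempty]
    rw [dif_neg hz, dif_neg hd]
termination_by (univ \ D.biUnion (closedNF G)).card
decreasing_by
  rwa [biUnion_insert, union_comm]

/-- If `G` is a finite Z-insensitive graph, then
`γ_Zg(G) = γ_g(G)` and `γ'_Zg(G) = γ'_g(G)`. -/
theorem zInsensitive_gammaZg_eq_gammaGg {V : Type*} [Fintype V] (G : SimpleGraph V)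
    (h : ZInsensitive G) :
    gammaZg G = gammaGg G ∧ gammaZg' G = gammaGg' G := by
  have hempty : (∅ : Finset V) = (∅ : Finset V).biUnion (closedNF G) := biUnion_empty.symm
  rw [gammaZg, gammaGg, gammaZg', gammaGg', hempty]
  exact ⟨zVal_biUnion_closedNF_eq_dVal G h.2 true ∅,
    zVal_biUnion_closedNF_eq_dVal G h.2 false ∅⟩

end ZGamePaper
end
end

section
/- If G is a finite graph without isolated vertices and n ≥ 2, then the game domination number of G equals the game Z-domination number of the lexicographic product of G with the complete graph on n vertices: γ_g(G) = γ_Zg(G ∘ K_n). -/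
/-!
In `G ∘ K_n` every closed neighbourhood is a union of fibres, `N[(g, h)] = N_G[g] × V(K_n)`, so
every position reachable in the Z-domination game is of the form `B × V(K_n)`. For `n ≥ 2` the
open neighbourhood of `(g, h)` still meets the fibre of `g` (in `(g, h')`, `h' ≠ h`), hence its
projection is all of `N_G[g]`: the move `(g, h)` is Z-legal at `B × V(K_n)` exactly when `g` is
legal at `B` in the domination game on `G`, and it leads to `(B ∪ N_G[g]) × V(K_n)`. The two game
trees therefore agree move for move, and so do their minimax values.
-/

open Finset

open scoped Classical

noncomputable section

namespace ZGamePaper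

variable {V : Type*} {W : Type*}

section Lattice

variable {α β γ : Type*}

theorem _root_.Finset.sup'_attach [SemilatticeSup γ] {s : Finset α} (h : s.attach.Nonempty)
    (f : α → γ) :
    s.attach.sup' h (fun v => f v) = s.sup' (attach_nonempty_iff.mp h) f := by
  rw [← WithBot.coe_eq_coe, coe_sup', coe_sup']
  exact sup_attach s (WithBot.some ∘ f)

theorem _root_.Finset.inf'_attach [SemilatticeInf γ] {s : Finset α} (h : s.attach.Nonempty)
    (f : α → γ) :
    s.attach.inf' h (fun v => f v) = s.inf' (attach_nonempty_iff.mp h) f :=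
  sup'_attach (γ := γᵒᵈ) h f

theorem _root_.Finset.sup'_product_univ_of_eq_fst [SemilatticeSup γ] [Fintype β] {s : Finset α}
    (h : (s ×ˢ univ : Finset (α × β)).Nonempty) {F : α × β → γ} {f : α → γ}
    (hF : ∀ p ∈ s ×ˢ univ, F p = f p.1) :
    (s ×ˢ univ).sup' h F = s.sup' h.fst f := by
  rw [sup'_congr h rfl hF, sup'_product_left]
  simp only [sup'_const]

theorem _root_.Finset.inf'_product_univ_of_eq_fst [SemilatticeInf γ] [Fintype β] {s : Finset α}
    (h : (s ×ˢ univ : Finset (α × β)).Nonempty) {F : α × β → γ} {f : α → γ}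
    (hF : ∀ p ∈ s ×ˢ univ, F p = f p.1) :
    (s ×ˢ univ).inf' h F = s.inf' h.fst f :=
  sup'_product_univ_of_eq_fst (γ := γᵒᵈ) h hF

end Lattice

section Unfolding

variable [Fintype V] (G : SimpleGraph V) {A : Finset V}

theorem zVal_true_of_nonempty (hA : (zLegal G A).Nonempty) :
    zVal G true A = 1 + (zLegal G A).inf' hA fun v => zVal G false (A ∪ closedNF G v) := by
  rw [zVal, dif_pos hA, if_pos rfl]
  exact congrArg _ (inf'_attach _ fun v => zVal G false (A ∪ closedNF G v))

theorem zVal_false_of_nonempty (hA : (zLegal G A).Nonempty) :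
    zVal G false A = 1 + (zLegal G A).sup' hA fun v => zVal G true (A ∪ closedNF G v) := by
  rw [zVal, dif_pos hA, if_neg Bool.false_ne_true]
  exact congrArg _ (sup'_attach _ fun v => zVal G true (A ∪ closedNF G v))

theorem zVal_of_not_nonempty (turn : Bool) (hA : ¬ (zLegal G A).Nonempty) :
    zVal G turn A = 0 := by
  rw [zVal, dif_neg hA]

theorem dVal_true_of_nonempty (hA : (dLegal G A).Nonempty) :
    dVal G true A = 1 + (dLegal G A).inf' hA fun v => dVal G false (A ∪ closedNF G v) := by
  rw [dVal, dif_pos hA, if_pos rfl]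
  exact congrArg _ (inf'_attach _ fun v => dVal G false (A ∪ closedNF G v))

theorem dVal_false_of_nonempty (hA : (dLegal G A).Nonempty) :
    dVal G false A = 1 + (dLegal G A).sup' hA fun v => dVal G true (A ∪ closedNF G v) := by
  rw [dVal, dif_pos hA, if_neg Bool.false_ne_true]
  exact congrArg _ (sup'_attach _ fun v => dVal G true (A ∪ closedNF G v))

theorem dVal_of_not_nonempty (turn : Bool) (hA : ¬ (dLegal G A).Nonempty) :
    dVal G turn A = 0 := by
  rw [dVal, dif_neg hA]

end Unfolding

section LexProdTop

variable [Fintype V] [Fintype W]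

theorem closedNF_lexProd_top (G : SimpleGraph V) (p : V × W) :
    closedNF (lexProd G (⊤ : SimpleGraph W)) p = closedNF G p.1 ×ˢ univ := by
  ext q
  simp only [closedNF, lexProd, SimpleGraph.top_adj, mem_filter, mem_univ, true_and,
    mem_product, and_true, Prod.ext_iff]
  by_cases hq : q.1 = p.1 <;> by_cases hq' : q.2 = p.2 <;> simp_all [eq_comm]

theorem openNF_lexProd_top_subset_iff [Nontrivial W] (G : SimpleGraph V) (p : V × W)
    (B : Finset V) :
    openNF (lexProd G (⊤ : SimpleGraph W)) p ⊆ B ×ˢ univ ↔ closedNF G p.1 ⊆ B := by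
  obtain ⟨g, h⟩ := p
  simp only [subset_iff, openNF, closedNF, lexProd, SimpleGraph.top_adj, mem_filter, mem_univ,
    true_and, mem_product, and_true, Prod.forall, forall_eq_or_imp]
  constructor
  · intro hsub
    obtain ⟨h', hh'⟩ := exists_ne h
    exact ⟨hsub g h' (Or.inr ⟨rfl, hh'.symm⟩), fun x hx => hsub x h (Or.inl hx)⟩
  · rintro ⟨hg, hnbr⟩ x y (hx | ⟨rfl, -⟩)
    exacts [hnbr x hx, hg]

theorem zLegal_lexProd_top [Nontrivial W] (G : SimpleGraph V) (B : Finset V) :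
    zLegal (lexProd G (⊤ : SimpleGraph W)) (B ×ˢ univ) = dLegal G B ×ˢ univ := by
  ext p
  simp [zLegal, dLegal, openNF_lexProd_top_subset_iff]

theorem zVal_lexProd_top [Nontrivial W] (G : SimpleGraph V) (turn : Bool) (B : Finset V) :
    zVal (lexProd G (⊤ : SimpleGraph W)) turn (B ×ˢ univ) = dVal G turn B := by
  have hmove : ∀ t, ∀ p ∈ dLegal G B ×ˢ (univ : Finset W),
      zVal (lexProd G ⊤) t (B ×ˢ univ ∪ closedNF (lexProd G ⊤) p) =
        dVal G t (B ∪ closedNF G p.1) := by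
    intro t p hp
    -- the measure decrease that `termination_by` needs for the recursive call
    have := dLegal_dec G B (mem_product.mp hp).1
    rw [closedNF_lexProd_top, ← union_product]
    exact zVal_lexProd_top G t _
  by_cases hB : (dLegal G B).Nonempty
  · have hB' : (zLegal (lexProd G ⊤) (B ×ˢ (univ : Finset W))).Nonempty := by
      rw [zLegal_lexProd_top]
      exact hB.product univ_nonempty
    -- `convert` reconciles the classical and the product `DecidableEq (V × W)` in the unions
    cases turn
    · rw [zVal_false_of_nonempty _ hB', dVal_false_of_nonempty _ hB,
        sup'_congr hB' (zLegal_lexProd_top G B) (fun _ _ => rfl)]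
      exact congrArg _ (sup'_product_univ_of_eq_fst _ fun p hp => by convert hmove true p hp)
    · rw [zVal_true_of_nonempty _ hB', dVal_true_of_nonempty _ hB,
        inf'_congr hB' (zLegal_lexProd_top G B) (fun _ _ => rfl)]
      exact congrArg _ (inf'_product_univ_of_eq_fst _ fun p hp => by convert hmove false p hp)
  · have hB' : ¬ (zLegal (lexProd G ⊤) (B ×ˢ (univ : Finset W))).Nonempty := by
      rwa [zLegal_lexProd_top, nonempty_product, and_iff_left univ_nonempty]
    rw [zVal_of_not_nonempty _ _ hB', dVal_of_not_nonempty _ _ hB]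
termination_by (univ \ B).card

end LexProdTop

theorem gammaGg_eq_gammaZg_lexProd_top_general {V : Type*} [Fintype V] (G : SimpleGraph V)
    (n : ℕ) (hn : 2 ≤ n) :
    gammaGg G = gammaZg (lexProd G (⊤ : SimpleGraph (Fin n))) := by
  have : Nontrivial (Fin n) := Fin.nontrivial_iff_two_le.mpr hn
  rw [gammaGg, gammaZg, ← empty_product (univ : Finset (Fin n)), zVal_lexProd_top]

/-- If `G` has no isolated vertices and `n ≥ 2`, then
`γ_g(G) = γ_Zg(G ∘ K_n)`. -/
theorem gammaGg_eq_gammaZg_lexProd_top {V : Type*} [Fintype V] (G : SimpleGraph V)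
    (hiso : ∀ v : V, ∃ u : V, G.Adj v u) (n : ℕ) (hn : 2 ≤ n) :
    gammaGg G = gammaZg (lexProd G (⊤ : SimpleGraph (Fin n))) :=
  gammaGg_eq_gammaZg_lexProd_top_general G n hn

end ZGamePaper
end
end

section
/- If G is a finite graph and n ≥ 2, then every vertex of the lexicographic product G ∘ K_n has a true twin distinct from itself, and consequently G ∘ K_n is Z-insensitive. -/
open Finset

open scoped Classical

noncomputable section

namespace ZGamePaper

variable {V : Type*} {W : Type*}

section

variable [Fintype V] (G : SimpleGraph V)

@[simp]
lemma mem_closedNF {v x : V} : x ∈ closedNF G v ↔ x = v ∨ G.Adj v x := by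
  simp [closedNF]

@[simp]
lemma mem_openNF {v x : V} : x ∈ openNF G v ↔ G.Adj v x := by
  simp [openNF]

lemma mem_closedNF_comm {v x : V} : x ∈ closedNF G v ↔ v ∈ closedNF G x := by
  simp only [mem_closedNF, eq_comm, G.adj_comm]

lemma mem_closedNF_self (v : V) : v ∈ closedNF G v := by
  simp

lemma adj_of_closedNF_eq {v q : V} (hne : q ≠ v) (h : closedNF G q = closedNF G v) :
    G.Adj v q := by
  have hq : q ∈ closedNF G v := h ▸ mem_closedNF_self G q
  simpa [hne] using hq

/-- The neighbour `q` of `v` is dominated by some `d ∈ D`; as `d ∈ N[q] = N[v]`, the vertex `v`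
is dominated by `d` as well. -/
lemma not_hasZConfig_of_forall_exists_twin
    (htwin : ∀ v : V, ∃ q : V, q ≠ v ∧ closedNF G q = closedNF G v) (D : Finset V) :
    ¬ HasZConfig G (D.biUnion (closedNF G)) := by
  rintro ⟨v, hv, hNv, -⟩
  obtain ⟨q, hne, hq⟩ := htwin v
  obtain ⟨d, hd, hqd⟩ :=
    Finset.mem_biUnion.mp (hNv ((mem_openNF G).mpr (adj_of_closedNF_eq G hne hq)))
  have hdv : d ∈ closedNF G v := hq ▸ (mem_closedNF_comm G).mp hqd
  exact hv (Finset.mem_biUnion.mpr ⟨d, hd, (mem_closedNF_comm G).mp hdv⟩)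

lemma zInsensitive_of_forall_exists_twin
    (htwin : ∀ v : V, ∃ q : V, q ≠ v ∧ closedNF G q = closedNF G v) : ZInsensitive G := by
  refine ⟨fun v => ?_, not_hasZConfig_of_forall_exists_twin G htwin⟩
  obtain ⟨q, hne, hq⟩ := htwin v
  exact ⟨q, adj_of_closedNF_eq G hne hq⟩

lemma closedNF_lexProd_eq_of_closedNF_eq [Fintype W] (H : SimpleGraph W) (v : V) {i j : W}
    (h : closedNF H i = closedNF H j) :
    closedNF (lexProd G H) (v, i) = closedNF (lexProd G H) (v, j) := by
  ext ⟨x, k⟩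
  have hk : (k = i ∨ H.Adj i k) ↔ (k = j ∨ H.Adj j k) := by
    simpa only [mem_closedNF] using Finset.ext_iff.mp h k
  simp only [mem_closedNF, lexProd, Prod.mk.injEq]
  constructor <;> rintro (⟨rfl, hki⟩ | hadj | ⟨rfl, hik⟩) <;> grind

lemma lexProd_exists_twin [Fintype W] (H : SimpleGraph W)
    (hH : ∀ i : W, ∃ j : W, j ≠ i ∧ closedNF H j = closedNF H i) (p : V × W) :
    ∃ q : V × W, q ≠ p ∧ closedNF (lexProd G H) q = closedNF (lexProd G H) p := by
  obtain ⟨j, hne, hj⟩ := hH p.2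
  exact ⟨(p.1, j), fun h => hne (congrArg Prod.snd h),
    closedNF_lexProd_eq_of_closedNF_eq G H p.1 hj⟩

lemma closedNF_top [Fintype W] (i : W) : closedNF (⊤ : SimpleGraph W) i = Finset.univ := by
  ext k
  simpa [eq_comm] using eq_or_ne k i

end

/-- If `n ≥ 2`, then every vertex of `G ∘ K_n` has a true twin
distinct from itself, and consequently `G ∘ K_n` is Z-insensitive. -/
theorem lexProd_top_twins_and_zInsensitive {V : Type*} [Fintype V] (G : SimpleGraph V)
    (n : ℕ) (hn : 2 ≤ n) :
    (∀ p : V × Fin n, ∃ q : V × Fin n, q ≠ p ∧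
      closedNF (lexProd G (⊤ : SimpleGraph (Fin n))) q =
        closedNF (lexProd G (⊤ : SimpleGraph (Fin n))) p) ∧
    ZInsensitive (lexProd G (⊤ : SimpleGraph (Fin n))) := by
  have hK : ∀ i : Fin n, ∃ j : Fin n, j ≠ i ∧ closedNF ⊤ j = closedNF ⊤ i := fun i =>
    (Fintype.exists_ne_of_one_lt_card (by rw [Fintype.card_fin]; omega) i).imp
      fun j hj => ⟨hj, by rw [closedNF_top, closedNF_top]⟩
  have htwin := lexProd_exists_twin G ⊤ hK
  exact ⟨htwin, zInsensitive_of_forall_exists_twin _ htwin⟩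

end ZGamePaper
end
end
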